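/- Let u be a real number with 0 < u < arccosh(3/2). Then φ(u) is purely imaginary (Re φ(u) = 0) with −π/3 < Im φ(u) < 0, and moreover e^{u} + e^{−u} − e^{φ(u)} − e^{−φ(u)} = 1. -/

import Mathlib

/-!
Put `z = cosh u - 1/2 - (i/2)√((2 cosh u + 1)(3 - 2 cosh u))`, so that `φ(u) = log z`. Since
`(2c - 1)² + (2c + 1)(3 - 2c) = 4` for `c = cosh u`, the point `z` lies on the unit circle, hence `φ(u) = i arg z`
and `e^{-φ(u)} = z̄`, so `e^{φ(u)} + e^{-φ(u)} = 2 Re z = 2 cosh u - 1`. For `1 < cosh u < 3/2`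
we have `Im z < 0` and `Re z > 1/2 = cos(π/3)`, which confines `arg z` to `(-π/3, 0)`.
-/

open Complex

noncomputable def arccosh (x : ℝ) : ℝ := Real.log (x + Real.sqrt (x ^ 2 - 1))

noncomputable def phiu (u : ℝ) : ℂ :=
  Complex.log ((Real.cosh u : ℂ) - 1/2 -
    (Complex.I / 2) * (Real.sqrt ((2 * Real.cosh u + 1) * (3 - 2 * Real.cosh u)) : ℂ))

lemma Complex.log_re_of_norm_eq_one {z : ℂ} (hz : ‖z‖ = 1) : (log z).re = 0 := by
  rw [log_re, hz, Real.log_one]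

lemma Complex.exp_log_add_exp_neg_log_of_norm_eq_one {z : ℂ} (hz : ‖z‖ = 1) :
    exp (log z) + exp (-log z) = 2 * z.re := by
  have hz0 : z ≠ 0 := norm_ne_zero_iff.mp (by rw [hz]; exact one_ne_zero)
  rw [exp_neg, exp_log hz0, inv_eq_conj hz, add_conj, ofReal_mul, ofReal_ofNat]

lemma Complex.abs_arg_lt_pi_div_three {z : ℂ} (h : ‖z‖ < 2 * z.re) : |arg z| < Real.pi / 3 := by
  have hz0 : z ≠ 0 := by rintro rfl; simp at h
  have hcos : 1 / 2 < Real.cos |arg z| := by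
    rw [Real.cos_abs, cos_arg hz0, lt_div_iff₀ (norm_pos_iff.mpr hz0)]
    linarith
  by_contra! hle
  have := Real.cos_le_cos_of_nonneg_of_le_pi (by positivity) (abs_arg_le_pi z) hle
  rw [Real.cos_pi_div_three] at this
  linarith

noncomputable def phiuPoint (c : ℝ) : ℂ :=
  (c : ℂ) - 1/2 - (I / 2) * (Real.sqrt ((2 * c + 1) * (3 - 2 * c)) : ℂ)

lemma phiu_eq_log_phiuPoint (u : ℝ) : phiu u = log (phiuPoint (Real.cosh u)) := rfl

lemma phiuPoint_re (c : ℝ) : (phiuPoint c).re = c - 1/2 := by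
  simp [phiuPoint]

lemma phiuPoint_im (c : ℝ) : (phiuPoint c).im = -Real.sqrt ((2 * c + 1) * (3 - 2 * c)) / 2 := by
  simp [phiuPoint]
  ring

lemma norm_phiuPoint {c : ℝ} (hc₁ : -1/2 ≤ c) (hc₂ : c ≤ 3/2) : ‖phiuPoint c‖ = 1 := by
  have hs := Real.sq_sqrt (show 0 ≤ (2 * c + 1) * (3 - 2 * c) by nlinarith)
  rw [norm_def, normSq_apply, phiuPoint_re, phiuPoint_im, Real.sqrt_eq_one]
  linear_combination hs / 4

lemma phiuPoint_im_neg {c : ℝ} (hc₁ : -1/2 < c) (hc₂ : c < 3/2) : (phiuPoint c).im < 0 := by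
  rw [phiuPoint_im]
  have := Real.sqrt_pos.mpr (show 0 < (2 * c + 1) * (3 - 2 * c) by nlinarith)
  linarith

/-- Lemma: `φ(u)` is purely imaginary with `−π/3 < Im φ(u) < 0`, and
`e^u + e^{−u} − e^{φ(u)} − e^{−φ(u)} = 1`. -/
theorem phiu_properties (u : ℝ) (hu0 : 0 < u) (hu1 : u < arccosh (3/2)) :
    (phiu u).re = 0 ∧ -Real.pi / 3 < (phiu u).im ∧ (phiu u).im < 0 ∧
      Complex.exp (u : ℂ) + Complex.exp (-(u : ℂ)) -
        Complex.exp (phiu u) - Complex.exp (-(phiu u)) = 1 := by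
  have hc₁ : 1 < Real.cosh u := Real.one_lt_cosh.mpr hu0.ne'
  -- `arccosh` unfolds to Mathlib's `Real.arcosh`
  have hc₂ : Real.cosh u < 3/2 := (Real.arcosh_lt_arcosh (Real.cosh_pos u) (by norm_num)).mp
    (by rwa [Real.arcosh_cosh hu0.le])
  set z := phiuPoint (Real.cosh u)
  have hz : ‖z‖ = 1 := norm_phiuPoint (by linarith) hc₂.le
  have harg : |arg z| < Real.pi / 3 :=
    abs_arg_lt_pi_div_three (by rw [hz, phiuPoint_re]; linarith)
  rw [phiu_eq_log_phiuPoint, log_im]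
  refine ⟨log_re_of_norm_eq_one hz, by linarith [neg_abs_le (arg z)],
    arg_neg_iff.mpr (phiuPoint_im_neg (by linarith) hc₂), ?_⟩
  rw [sub_sub, exp_log_add_exp_neg_log_of_norm_eq_one hz, phiuPoint_re, ← two_cosh,
    ← ofReal_cosh]
  push_cast
  ring
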